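/- arXiv:1906.06783 — 6 statements merged into one kernel-verified Lean document; each statement's English description precedes it below -/
import Mathlib

section
/- Let H be a finite graph (possibly with loops), c ≥ 1 and t ≥ 0 integers. If χ(E_c(H)) ≤ c + t, then E_c(H) admits a suited proper (c+t)-coloring, i.e., a proper coloring Ψ of E_c(H) with colors {1,…,c+t} such that for every map φ ∈ V(E_c(H)), Ψ(φ) ∈ im(φ) ∪ {c+1,…,c+t}. -/
/-- Two maps `φ₁ φ₂ : V → C` are co-proper relative to an adjacency relation `Adj` on `V`
if `φ₁ u ≠ φ₂ v` whenever `u` is adjacent to `v`. Co-proper pairs of maps `V → Fin c` are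
exactly the adjacent pairs of vertices in the exponential graph `E_c(H)`. -/
def CoProper {V C : Type*} (Adj : V → V → Prop) (φ₁ φ₂ : V → C) : Prop :=
  ∀ u v, Adj u v → φ₁ u ≠ φ₂ v

/-!
The `c` constant maps are pairwise co-proper, so any proper coloring gives them `c` distinct
colors, and after permuting the colors we may assume that the constant map `i` gets color `i`.
If now `φ` gets a primary color `i` not in the image of `φ`, then `φ` and the constant map `i`
are co-proper but have the same color, which is impossible.
-/

section

variable {V α β γ : Type*} (Adj : V → V → Prop)

def IsCoProperColoring (Ψ : (V → α) → β) : Prop :=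
  ∀ φ₁ φ₂, CoProper Adj φ₁ φ₂ → Ψ φ₁ ≠ Ψ φ₂

theorem coProper_const_of_notMem_range {i : α} {φ : V → α} (h : i ∉ Set.range φ) :
    CoProper Adj (fun _ => i) φ :=
  fun _ v _ hv => h ⟨v, hv.symm⟩

theorem coProper_const_const {i j : α} (h : i ≠ j) :
    CoProper Adj (fun _ : V => i) (fun _ => j) :=
  fun _ _ _ => h

namespace IsCoProperColoring

variable {Adj} {Ψ : (V → α) → β}

theorem comp_injective (hΨ : IsCoProperColoring Adj Ψ) {f : β → γ}
    (hf : Function.Injective f) :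
    IsCoProperColoring Adj (f ∘ Ψ) :=
  fun φ₁ φ₂ h heq => hΨ φ₁ φ₂ h (hf heq)

theorem injective_const (hΨ : IsCoProperColoring Adj Ψ) :
    Function.Injective fun i : α => Ψ fun _ : V => i := by
  intro i j hij
  by_contra hne
  exact hΨ _ _ (coProper_const_const Adj hne) hij

theorem mem_range_of_eq_const (hΨ : IsCoProperColoring Adj Ψ) {φ : V → α} {i : α}
    (h : Ψ φ = Ψ fun _ => i) :
    i ∈ Set.range φ := by
  by_contra hi
  exact hΨ _ _ (coProper_const_of_notMem_range Adj hi) h.symm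

theorem exists_suited [Finite α] (hΨ : IsCoProperColoring Adj Ψ) (ι : α → β)
    (hι : Function.Injective ι) :
    ∃ Ψ' : (V → α) → β, IsCoProperColoring Adj Ψ' ∧
      ∀ φ i, Ψ' φ = ι i → i ∈ Set.range φ := by
  obtain ⟨σ, hσ⟩ := Equiv.Perm.exists_extending_pair _ ι hΨ.injective_const hι
  have hσΨ : IsCoProperColoring Adj (σ ∘ Ψ) := hΨ.comp_injective σ.injective
  refine ⟨σ ∘ Ψ, hσΨ, fun φ i h => hσΨ.mem_range_of_eq_const ?_⟩
  simpa only [Function.comp_apply, hσ] using h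

end IsCoProperColoring

end

theorem exists_suited_coloring_general {V : Type*}
    (Adj : V → V → Prop) (c t : ℕ)
    (h : ∃ Ψ : (V → Fin c) → Fin (c + t),
      ∀ φ₁ φ₂, CoProper Adj φ₁ φ₂ → Ψ φ₁ ≠ Ψ φ₂) :
    ∃ Ψ : (V → Fin c) → Fin (c + t),
      (∀ φ₁ φ₂, CoProper Adj φ₁ φ₂ → Ψ φ₁ ≠ Ψ φ₂) ∧
      (∀ φ : V → Fin c, (Ψ φ : ℕ) < c → ∃ v : V, (φ v : ℕ) = (Ψ φ : ℕ)) := by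
  obtain ⟨Ψ, hΨ⟩ := h
  obtain ⟨Ψ', hproper, hsuited⟩ :=
    IsCoProperColoring.exists_suited hΨ (Fin.castAdd t) (Fin.castAdd_injective c t)
  refine ⟨Ψ', hproper, fun φ hlt => ?_⟩
  obtain ⟨v, hv⟩ := hsuited φ ⟨Ψ' φ, hlt⟩ (Fin.ext rfl)
  exact ⟨v, congrArg Fin.val hv⟩

/-- If the exponential graph `E_c(H)` is `(c+t)`-colorable, then it has a suited proper
`(c+t)`-coloring: a proper coloring `Ψ` such that whenever `Ψ φ` is a primary color
(one of the first `c` colors), the value `Ψ φ` lies in the image of `φ`. -/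
theorem exists_suited_coloring {V : Type*} [Fintype V]
    (Adj : V → V → Prop) (hsymm : Symmetric Adj) (c t : ℕ) (hc : 1 ≤ c)
    (h : ∃ Ψ : (V → Fin c) → Fin (c + t),
      ∀ φ₁ φ₂, CoProper Adj φ₁ φ₂ → Ψ φ₁ ≠ Ψ φ₂) :
    ∃ Ψ : (V → Fin c) → Fin (c + t),
      (∀ φ₁ φ₂, CoProper Adj φ₁ φ₂ → Ψ φ₁ ≠ Ψ φ₂) ∧
      (∀ φ : V → Fin c, (Ψ φ : ℕ) < c → ∃ v : V, (φ v : ℕ) = (Ψ φ : ℕ)) :=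
  exists_suited_coloring_general Adj c t h
end

section
/- Let H be a finite graph (possibly with loops) on n vertices, and let c ≥ 2n be an integer. Then the independence number of the exponential graph satisfies α(E_c(H)) ≤ n·c^{n−1}. -/
open Finset

section Colourings

variable {α : Type*} [Fintype α] [DecidableEq α]

lemma exists_perm_image_eq_of_card_eq {U U' : Finset α} (h : #U = #U') :
    ∃ σ : Equiv.Perm α, U.image σ = U' := by
  let e : U ≃ U' := Fintype.equivOfCardEq (by simpa using h)
  refine ⟨e.extendSubtype, eq_of_subset_of_card_le ?_ ?_⟩
  · intro _ hy
    obtain ⟨x, hx, rfl⟩ := mem_image.1 hy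
    exact e.extendSubtype_mem x hx
  · rw [card_image_of_injective _ (Equiv.injective _), h]

lemma card_filter_mem_card_eq (a : α) {r : ℕ} (hr : 0 < r) :
    #{U : Finset α | a ∈ U ∧ #U = r} = (Fintype.card α - 1).choose (r - 1) := by
  rw [← card_univ, ← card_erase_of_mem (mem_univ a), ← card_powersetCard]
  refine card_nbij' (·.erase a) (insert a) ?_ ?_ ?_ ?_ <;> intro U hU <;>
    simp only [mem_coe, mem_filter, mem_powersetCard, subset_erase, subset_univ, mem_univ,
      true_and] at hU ⊢
  · simp [card_erase_of_mem hU.1, hU.2]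
  · simp [card_insert_of_notMem hU.1, hU.2, Nat.sub_add_cancel hr]
  · exact insert_erase hU.1
  · exact erase_insert hU.1

variable {V : Type*} [Fintype V] [DecidableEq V]

lemma card_filter_image_eq_congr {U U' : Finset α} (h : #U = #U') :
    #{φ : V → α | univ.image φ = U} = #{φ : V → α | univ.image φ = U'} := by
  obtain ⟨σ, hσ⟩ := exists_perm_image_eq_of_card_eq h
  refine card_nbij' (σ ∘ ·) (σ.symm ∘ ·) ?_ ?_ ?_ ?_ <;> intro φ hφ <;>
    simp only [mem_coe, mem_filter, mem_univ, true_and] at hφ ⊢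
  · rw [← image_image, hφ, hσ]
  · rw [← image_image, hφ, ← hσ, image_image]
    simp
  · ext
    simp
  · ext
    simp

lemma card_filter_apply_eq (v : V) (a : α) :
    #{φ : V → α | φ v = a} = Fintype.card α ^ (Fintype.card V - 1) := by
  have hpi : ({φ : V → α | φ v = a} : Finset _) =
      Fintype.piFinset fun w => if w = v then {a} else univ := by
    ext φ
    simp only [mem_filter, mem_univ, true_and, Fintype.mem_piFinset]
    refine ⟨fun h w => ?_, fun h => by simpa using h v⟩
    split_ifs with hw <;> simp [hw, h]
  rw [hpi, Fintype.card_piFinset]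
  simp [apply_ite, prod_ite, filter_ne', card_erase_of_mem]

lemma card_filter_mem_image_le (a : α) :
    #{φ : V → α | a ∈ univ.image φ} ≤ Fintype.card V * Fintype.card α ^ (Fintype.card V - 1) :=
  calc #{φ : V → α | a ∈ univ.image φ} = #(univ.biUnion fun v => {φ : V → α | φ v = a}) := by
        congr 1
        ext φ
        simp
    _ ≤ ∑ v, #{φ : V → α | φ v = a} := card_biUnion_le
    _ = _ := by simp [card_filter_apply_eq]

end Colourings

/-- Erdős–Ko–Rado, applied to each size class separately. -/
lemma sum_le_sum_filter_mem_of_intersecting {c : ℕ} (a : Fin c) {𝒰 : Finset (Finset (Fin c))}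
    (h𝒰 : (𝒰 : Set (Finset (Fin c))).Intersecting) (hsize : ∀ U ∈ 𝒰, #U ≤ c / 2)
    (w : Finset (Fin c) → ℕ) (hw : ∀ U U', #U = #U' → w U = w U') :
    ∑ U ∈ 𝒰, w U ≤ ∑ U with a ∈ U, w U := by
  have hcard : ∀ 𝒱 : Finset (Finset (Fin c)),
      Set.MapsTo card (𝒱 : Set (Finset (Fin c))) (range (c + 1)) := by
    intro 𝒱 U _
    simpa [Nat.lt_succ_iff] using card_le_univ U
  rw [← sum_fiberwise_of_maps_to (hcard 𝒰), ← sum_fiberwise_of_maps_to (hcard _)]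
  refine sum_le_sum fun r _ => ?_
  rcases (𝒰.filter (#· = r)).eq_empty_or_nonempty with h | ⟨U₀, hU₀⟩
  · simp [h]
  obtain ⟨hU₀𝒰, rfl⟩ := mem_filter.1 hU₀
  have hU₀pos : 0 < #U₀ := card_pos.2 (nonempty_of_ne_empty (h𝒰.ne_bot hU₀𝒰))
  rw [sum_const_nat fun U hU => hw U U₀ (mem_filter.1 hU).2,
    sum_const_nat fun U hU => hw U U₀ (mem_filter.1 hU).2]
  refine Nat.mul_le_mul_right _ ?_
  calc #{U ∈ 𝒰 | #U = #U₀} ≤ (c - 1).choose (#U₀ - 1) :=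
        erdos_ko_rado (h𝒰.mono (coe_subset.2 (filter_subset _ _)))
          (fun U hU => (mem_filter.1 hU).2) (hsize U₀ hU₀𝒰)
    _ = #{U ∈ {U | a ∈ U} | #U = #U₀} := by
        rw [filter_filter, card_filter_mem_card_eq a hU₀pos, Fintype.card_fin]

lemma card_le_card_filter_mem_image_of_not_disjoint {V : Type*} [Fintype V] [DecidableEq V]
    {c : ℕ} (a : Fin c) (hc : 2 * Fintype.card V ≤ c) {S : Finset (V → Fin c)}
    (hS : ∀ φ ∈ S, ∀ ψ ∈ S, ¬Disjoint (univ.image φ) (univ.image ψ)) :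
    #S ≤ #{φ : V → Fin c | a ∈ univ.image φ} := by
  have hsize : ∀ U ∈ S.image (univ.image ·), #U ≤ c / 2 := by
    simp only [mem_image, forall_exists_index, and_imp, forall_apply_eq_imp_iff₂]
    intro φ _
    rw [Nat.le_div_iff_mul_le two_pos]
    linarith [card_image_le (s := univ) (f := φ), card_univ (α := V)]
  have hinter : (S.image (univ.image ·) : Set (Finset (Fin c))).Intersecting := by
    simp only [coe_image]
    rintro _ ⟨φ, hφ, rfl⟩ _ ⟨ψ, hψ, rfl⟩
    exact hS φ hφ ψ hψ
  calc #S ≤ #{φ : V → Fin c | univ.image φ ∈ S.image (univ.image ·)} :=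
        card_le_card fun φ hφ => by simpa using ⟨φ, hφ, rfl⟩
    _ = ∑ U ∈ S.image (univ.image ·), #{φ : V → Fin c | univ.image φ = U} :=
        (sum_card_fiberwise_eq_card_filter _ _ _).symm
    _ ≤ ∑ U with a ∈ U, #{φ : V → Fin c | univ.image φ = U} :=
        sum_le_sum_filter_mem_of_intersecting a hinter hsize _
          fun _ _ h => card_filter_image_eq_congr h
    _ = #{φ : V → Fin c | a ∈ univ.image φ} := by
        rw [sum_card_fiberwise_eq_card_filter]
        simp

lemma not_disjoint_image_of_not_coProper {V C : Type*} [Fintype V] [DecidableEq C]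
    {Adj : V → V → Prop} {φ ψ : V → C} (h : ¬CoProper Adj φ ψ) :
    ¬Disjoint (univ.image φ) (univ.image ψ) := by
  obtain ⟨u, v, -, huv⟩ : ∃ u v, Adj u v ∧ φ u = ψ v := by simpa [CoProper] using h
  exact not_disjoint_iff.2 ⟨φ u, by simp, by simp [huv]⟩

theorem exp_graph_independence_general {V : Type*} [Fintype V]
    (Adj : V → V → Prop) (c : ℕ)
    (hc : 2 * Fintype.card V ≤ c)
    (S : Finset (V → Fin c))
    (hS : ∀ φ₁ ∈ S, ∀ φ₂ ∈ S, ¬ CoProper Adj φ₁ φ₂) :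
    S.card ≤ Fintype.card V * c ^ (Fintype.card V - 1) := by
  classical
  rcases S.eq_empty_or_nonempty with rfl | ⟨φ, hφ⟩
  · simp
  obtain ⟨u, -⟩ : ∃ u v, Adj u v ∧ φ u = φ v := by simpa [CoProper] using hS φ hφ φ hφ
  have hc₀ : 0 < c := by
    have := Fintype.card_pos_iff.2 ⟨u⟩
    omega
  calc S.card ≤ #{ψ : V → Fin c | ⟨0, hc₀⟩ ∈ univ.image ψ} :=
        card_le_card_filter_mem_image_of_not_disjoint _ hc fun φ hφ ψ hψ =>
          not_disjoint_image_of_not_coProper (hS φ hφ ψ hψ)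
    _ ≤ Fintype.card V * c ^ (Fintype.card V - 1) := by
        simpa using card_filter_mem_image_le (V := V) (⟨0, hc₀⟩ : Fin c)

/-- If `H` is a graph (possibly with loops) on `n` vertices and `c ≥ 2n`, then every
independent set of the exponential graph `E_c(H)` has size at most `n·c^(n-1)`.
(An independent set is a set of maps no two of which — including a map with itself —
are co-proper.) -/
theorem exp_graph_independence {V : Type*} [Fintype V]
    (Adj : V → V → Prop) (hsymm : Symmetric Adj) (c : ℕ)
    (hc : 2 * Fintype.card V ≤ c)
    (S : Finset (V → Fin c))
    (hS : ∀ φ₁ ∈ S, ∀ φ₂ ∈ S, ¬ CoProper Adj φ₁ φ₂) :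
    S.card ≤ Fintype.card V * c ^ (Fintype.card V - 1) :=
  exp_graph_independence_general Adj c hc S hS
end

section
/- Let H be a finite triangle-free graph (possibly with loops) on n ≥ 4 vertices, let t ≥ 0 and c ≥ 16(nt + n³) be integers, let Ψ be a suited (c+t)-coloring of the exponential graph E_c(H), and set x = ((nt + n³)c³)^{1/4}. Then there exists a vertex v ∈ V(H) such that at least c − x primary colors are v-robust with respect to Ψ. -/
/-- Let `H` be a triangle-free graph (possibly with loops) on `n ≥ 4` vertices, let `t ≥ 0`
and `c ≥ 16(nt + n³)`, let `Ψ` be a suited proper `(c+t)`-coloring of `E_c(H)`, and set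
`x = ((nt + n³)c³)^(1/4)`. Then there is a vertex `v` such that at least `c - x` primary
colors `b` are `v`-robust, i.e. every `φ` with `Ψ φ = b` takes value `b` somewhere on the
closed neighborhood of `v`. -/
theorem exists_robust_vertex {V : Type*} [Fintype V]
    (Adj : V → V → Prop) (hsymm : Symmetric Adj)
    (htrianglefree : ∀ a b d : V, a ≠ b → b ≠ d → a ≠ d →
      ¬ (Adj a b ∧ Adj b d ∧ Adj a d))
    (n : ℕ) (hn : Fintype.card V = n) (hn4 : 4 ≤ n)
    (t c : ℕ) (hc : 16 * (n * t + n ^ 3) ≤ c)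
    (Ψ : (V → Fin c) → Fin (c + t))
    (hproper : ∀ φ₁ φ₂, CoProper Adj φ₁ φ₂ → Ψ φ₁ ≠ Ψ φ₂)
    (hsuited : ∀ φ : V → Fin c, (Ψ φ : ℕ) < c → ∃ v : V, (φ v : ℕ) = (Ψ φ : ℕ)) :
    ∃ v : V,
      (c : ℝ) - (((n * t + n ^ 3) * c ^ 3 : ℕ) : ℝ) ^ ((1 : ℝ) / 4) ≤
        ({b : Fin c | ∀ φ : V → Fin c, (Ψ φ : ℕ) = (b : ℕ) →
            ∃ w : V, (w = v ∨ Adj v w) ∧ φ w = b}.ncard : ℝ) := by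
  classical
  by_contra hcon
  push_neg at hcon
  set K := n * t + n ^ 3 with hK
  have hnpos : 0 < n := by omega
  have hn3K : n ^ 3 ≤ K := Nat.le_add_left _ _
  have htnK : t * n ≤ K := by rw [hK, mul_comm t n]; exact Nat.le_add_right _ _
  have hKpos : 0 < K := lt_of_lt_of_le (pow_pos hnpos 3) hn3K
  have hcpos : 0 < c := lt_of_lt_of_le (by positivity) hc
  -- `x ≥ 8K`
  have hpow4 : (8 * K) ^ 4 ≤ K * c ^ 3 := by
    have h1 : (16 * K) ^ 3 ≤ c ^ 3 := Nat.pow_le_pow_left hc 3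
    calc (8 * K) ^ 4 = K * (16 * K) ^ 3 := by ring
      _ ≤ K * c ^ 3 := Nat.mul_le_mul_left _ h1
  have key : ((8 * K : ℕ) : ℝ) ≤ ((K * c ^ 3 : ℕ) : ℝ) ^ ((1 : ℝ) / 4) := by
    have h0 : (0 : ℝ) ≤ ((8 * K : ℕ) : ℝ) := Nat.cast_nonneg _
    have h2 : (((8 * K : ℕ) : ℝ)) ^ (4 : ℕ) ≤ ((K * c ^ 3 : ℕ) : ℝ) := by
      exact_mod_cast hpow4
    have h3 : ((((8 * K : ℕ) : ℝ)) ^ (4 : ℕ)) ^ ((1 : ℝ) / 4) = ((8 * K : ℕ) : ℝ) := by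
      rw [← Real.rpow_natCast ((8 * K : ℕ) : ℝ) 4, ← Real.rpow_mul h0]
      norm_num
    calc ((8 * K : ℕ) : ℝ) = ((((8 * K : ℕ) : ℝ)) ^ (4 : ℕ)) ^ ((1 : ℝ) / 4) := h3.symm
      _ ≤ ((K * c ^ 3 : ℕ) : ℝ) ^ ((1 : ℝ) / 4) :=
        Real.rpow_le_rpow (by positivity) h2 (by norm_num)
  -- the robustness predicate and the bad sets
  set P : V → Fin c → Prop := fun v b => ∀ φ : V → Fin c, (Ψ φ : ℕ) = (b : ℕ) →
      ∃ w : V, (w = v ∨ Adj v w) ∧ φ w = b with hPdef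
  set Bd : V → Finset (Fin c) := fun v => Finset.univ.filter (fun b => ¬ P v b) with hBdDef
  have hBdcard : ∀ v : V, 8 * K < (Bd v).card := by
    intro v
    have hset : {b : Fin c | ∀ φ : V → Fin c, (Ψ φ : ℕ) = (b : ℕ) →
        ∃ w : V, (w = v ∨ Adj v w) ∧ φ w = b} = ↑(Finset.univ.filter (P v)) := by
      ext b
      simp [hPdef]
    have h1 := hcon v
    rw [hset, Set.ncard_coe_finset] at h1
    have h2 : ((Finset.univ.filter (P v)).card : ℝ) + ((8 * K : ℕ) : ℝ) < (c : ℝ) := by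
      linarith
    have h3 : (Finset.univ.filter (P v)).card + 8 * K < c := by exact_mod_cast h2
    have h4 := Finset.card_filter_add_card_filter_not
      (s := (Finset.univ : Finset (Fin c))) (p := P v)
    rw [Finset.card_univ, Fintype.card_fin] at h4
    have h5 : (Bd v).card = (Finset.univ.filter (fun b => ¬ P v b)).card := rfl
    omega
  -- witnesses for bad colors
  have hwitEx : ∀ (v : V) (b : Fin c), ∃ φ : V → Fin c,
      (¬ P v b) → ((Ψ φ : ℕ) = (b : ℕ) ∧ ∀ w, (w = v ∨ Adj v w) → φ w ≠ b) := by
    intro v b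
    by_cases h : P v b
    · exact ⟨fun _ => b, fun h' => absurd h h'⟩
    · have h' := h
      simp only [hPdef] at h'
      push_neg at h'
      obtain ⟨φ, hφ1, hφ2⟩ := h'
      exact ⟨φ, fun _ => ⟨hφ1, hφ2⟩⟩
  choose wit hwitp using hwitEx
  -- representatives for attained secondary colors
  have hrhoEx : ∀ s : Fin (c + t), ∃ ρ : V → Fin c, (∃ φ, Ψ φ = s) → Ψ ρ = s := by
    intro s
    by_cases h : ∃ φ, Ψ φ = s
    · exact ⟨h.choose, fun _ => h.choose_spec⟩
    · exact ⟨fun _ => ⟨0, hcpos⟩, fun h' => absurd h' h⟩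
  choose rho hrho using hrhoEx
  -- exclusion sets coming from secondary representatives
  set Excl : V → Finset (Fin c) := fun v => Finset.univ.filter
      (fun b => ∃ s : Fin (c + t), c ≤ (s : ℕ) ∧ ∃ u, Adj u v ∧ rho s u = b) with hExclDef
  have hExclcard : ∀ v, (Excl v).card ≤ t * n := by
    intro v
    have hsub : Excl v ⊆ ((Finset.univ.filter (fun s : Fin (c + t) => c ≤ (s : ℕ))) ×ˢ
        Finset.univ).image (fun p : Fin (c + t) × V => rho p.1 p.2) := by
      intro b hb
      rw [hExclDef] at hb
      simp only [Finset.mem_filter, Finset.mem_univ, true_and] at hb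
      obtain ⟨s, hs, u, hu, heq⟩ := hb
      exact Finset.mem_image.mpr ⟨(s, u), Finset.mem_product.mpr
        ⟨Finset.mem_filter.mpr ⟨Finset.mem_univ _, hs⟩, Finset.mem_univ _⟩, heq⟩
    have hfil : (Finset.univ.filter (fun s : Fin (c + t) => c ≤ (s : ℕ))).card ≤ t := by
      have hsub2 : (Finset.univ.filter (fun s : Fin (c + t) => c ≤ (s : ℕ))) ⊆
          Finset.univ.image (fun j : Fin t => (⟨c + j.1, by have := j.2; omega⟩ : Fin (c + t))) := by
        intro s hs
        have hs' : c ≤ (s : ℕ) := (Finset.mem_filter.mp hs).2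
        have hlt : (s : ℕ) - c < t := by have := s.2; omega
        refine Finset.mem_image.mpr ⟨⟨(s : ℕ) - c, hlt⟩, Finset.mem_univ _, ?_⟩
        apply Fin.ext
        simp
        omega
      calc (Finset.univ.filter (fun s : Fin (c + t) => c ≤ (s : ℕ))).card
          ≤ (Finset.univ.image (fun j : Fin t =>
              (⟨c + j.1, by have := j.2; omega⟩ : Fin (c + t)))).card :=
            Finset.card_le_card hsub2
        _ ≤ (Finset.univ : Finset (Fin t)).card := Finset.card_image_le
        _ = t := by simp
    calc (Excl v).card
        ≤ (((Finset.univ.filter (fun s : Fin (c + t) => c ≤ (s : ℕ))) ×ˢ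
            Finset.univ).image (fun p : Fin (c + t) × V => rho p.1 p.2)).card :=
          Finset.card_le_card hsub
      _ ≤ ((Finset.univ.filter (fun s : Fin (c + t) => c ≤ (s : ℕ))) ×ˢ
            (Finset.univ : Finset V)).card := Finset.card_image_le
      _ = (Finset.univ.filter (fun s : Fin (c + t) => c ≤ (s : ℕ))).card *
            (Finset.univ : Finset V).card := Finset.card_product _ _
      _ ≤ t * n := Nat.mul_le_mul hfil (by rw [Finset.card_univ, hn])
  -- refined bad sets
  set Bd2 : V → Finset (Fin c) := fun v => Bd v \ Excl v with hBd2Def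
  have hBd2card : ∀ v, 7 * K < (Bd2 v).card := by
    intro v
    have h1 := hBdcard v
    have h2 := hExclcard v
    have h3 : (Bd v).card ≤ (Bd2 v).card + (Excl v).card := by
      rw [hBd2Def]
      exact Finset.card_le_card_sdiff_add_card
    omega
  -- neighborhoods
  set Nbr : V → Finset V := fun u => Finset.univ.filter (fun z => Adj z u) with hNbrDef
  have hNbrcard : ∀ u, (Nbr u).card ≤ n := by
    intro u
    calc (Nbr u).card ≤ (Finset.univ : Finset V).card := Finset.card_filter_le _ _
      _ = n := by rw [Finset.card_univ, hn]
  -- the product set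
  set T : Finset (V → Fin c) := Fintype.piFinset Bd2 with hTdef
  have hTcard : T.card = ∏ v, (Bd2 v).card := Fintype.card_piFinset _
  have hTpos : 0 < T.card := by
    rw [hTcard]
    exact Finset.prod_pos (fun v _ => by have := hBd2card v; omega)
  set b₀ : Fin c := ⟨0, hcpos⟩ with hb₀
  set Fail : V → V → Finset (V → Fin c) := fun w u =>
    T.filter (fun σ => σ u ∈ (Nbr u).image (wit w (σ w))) with hFailDef
  -- slice bound for each Fail set
  have hFailcard : ∀ w u : V, w ≠ u →
      (Fail w u).card ≤ (∏ z ∈ Finset.univ.erase u, (Bd2 z).card) * n := by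
    intro w u hwu
    set F : V → Finset (Fin c) := fun z => if z = u then {b₀} else Bd2 z with hFdef
    set g : (V → Fin c) → (V → Fin c) × Fin c := fun σ => (Function.update σ u b₀, σ u)
      with hgdef
    set T' : Finset ((V → Fin c) × Fin c) :=
      (Fintype.piFinset F).biUnion
        (fun τ => ((Nbr u).image (wit w (τ w))).image (fun b => (τ, b))) with hT'def
    have hmaps : ∀ σ ∈ Fail w u, g σ ∈ T' := by
      intro σ hσ
      rw [hFailDef] at hσ
      obtain ⟨hσT, hσmem⟩ := Finset.mem_filter.mp hσ
      have hσZ : ∀ z, σ z ∈ Bd2 z := Fintype.mem_piFinset.mp hσT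
      have hτ : Function.update σ u b₀ ∈ Fintype.piFinset F := by
        rw [Fintype.mem_piFinset]
        intro z
        by_cases hz : z = u
        · subst hz
          rw [hFdef]
          simp only [if_pos rfl]
          rw [Function.update_self]
          exact Finset.mem_singleton_self _
        · rw [hFdef]
          simp only [if_neg hz]
          rw [Function.update_of_ne hz]
          exact hσZ z
      rw [hT'def]
      refine Finset.mem_biUnion.mpr ⟨Function.update σ u b₀, hτ, ?_⟩
      refine Finset.mem_image.mpr ⟨σ u, ?_, rfl⟩
      rwa [Function.update_of_ne hwu]
    have hinj : Set.InjOn g (Fail w u) := by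
      intro σ₁ _ σ₂ _ heq
      rw [hgdef] at heq
      have h1 : Function.update σ₁ u b₀ = Function.update σ₂ u b₀ := congrArg Prod.fst heq
      have h2 : σ₁ u = σ₂ u := congrArg Prod.snd heq
      funext z
      by_cases hz : z = u
      · subst hz; exact h2
      · have h3 := congrFun h1 z
        rwa [Function.update_of_ne hz, Function.update_of_ne hz] at h3
    have hc1 : (Fail w u).card ≤ T'.card := Finset.card_le_card_of_injOn g hmaps hinj
    have hc2 : T'.card ≤ (Fintype.piFinset F).card * n := by
      rw [hT'def]
      refine le_trans Finset.card_biUnion_le ?_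
      calc ∑ τ ∈ Fintype.piFinset F, (((Nbr u).image (wit w (τ w))).image (fun b => (τ, b))).card
          ≤ ∑ _τ ∈ Fintype.piFinset F, n := by
            refine Finset.sum_le_sum fun τ _ => ?_
            exact le_trans Finset.card_image_le (le_trans Finset.card_image_le (hNbrcard u))
        _ = (Fintype.piFinset F).card * n := by rw [Finset.sum_const, smul_eq_mul]
    have hc3 : (Fintype.piFinset F).card = ∏ z ∈ Finset.univ.erase u, (Bd2 z).card := by
      rw [Fintype.card_piFinset]
      rw [← Finset.mul_prod_erase Finset.univ (fun z => (F z).card) (Finset.mem_univ u)]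
      have hFu : (F u).card = 1 := by rw [hFdef]; simp
      rw [hFu, one_mul]
      refine Finset.prod_congr rfl fun z hz => ?_
      have hz' : z ≠ u := Finset.ne_of_mem_erase hz
      rw [hFdef]
      simp [hz']
    rw [← hc3]
    exact le_trans hc1 hc2
  -- existence of a good tuple
  have hgood : ∃ σ ∈ T, ∀ w u : V, w ≠ u → σ u ∉ (Nbr u).image (wit w (σ w)) := by
    by_contra hng
    push_neg at hng
    set Pairs : Finset (V × V) := (Finset.univ ×ˢ Finset.univ).filter
      (fun p : V × V => p.1 ≠ p.2) with hPairsDef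
    have hsub : T ⊆ Pairs.biUnion (fun p => Fail p.1 p.2) := by
      intro σ hσ
      obtain ⟨w, u, hne, hmem⟩ := hng σ hσ
      refine Finset.mem_biUnion.mpr ⟨(w, u), ?_, ?_⟩
      · rw [hPairsDef]
        exact Finset.mem_filter.mpr ⟨Finset.mem_product.mpr
          ⟨Finset.mem_univ _, Finset.mem_univ _⟩, hne⟩
      · rw [hFailDef]
        exact Finset.mem_filter.mpr ⟨hσ, hmem⟩
    have h1 : T.card ≤ ∑ p ∈ Pairs, (Fail p.1 p.2).card :=
      le_trans (Finset.card_le_card hsub) Finset.card_biUnion_le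
    have h2 : ∀ p ∈ Pairs, (Fail p.1 p.2).card * (7 * K + 1) ≤ n * T.card := by
      intro p hp
      have hne : p.1 ≠ p.2 := by
        rw [hPairsDef] at hp
        exact (Finset.mem_filter.mp hp).2
      have hA := hFailcard p.1 p.2 hne
      have hB : 7 * K + 1 ≤ (Bd2 p.2).card := hBd2card p.2
      have hT2 : (Bd2 p.2).card * (∏ z ∈ Finset.univ.erase p.2, (Bd2 z).card) = T.card := by
        rw [hTcard]
        exact Finset.mul_prod_erase Finset.univ (fun z => (Bd2 z).card) (Finset.mem_univ p.2)
      calc (Fail p.1 p.2).card * (7 * K + 1)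
          ≤ ((∏ z ∈ Finset.univ.erase p.2, (Bd2 z).card) * n) * (7 * K + 1) :=
            Nat.mul_le_mul_right _ hA
        _ = n * ((7 * K + 1) * ∏ z ∈ Finset.univ.erase p.2, (Bd2 z).card) := by ring
        _ ≤ n * ((Bd2 p.2).card * ∏ z ∈ Finset.univ.erase p.2, (Bd2 z).card) :=
            Nat.mul_le_mul_left _ (Nat.mul_le_mul_right _ hB)
        _ = n * T.card := by rw [hT2]
    have h7 : Pairs.card ≤ n * n := by
      calc Pairs.card ≤ ((Finset.univ : Finset V) ×ˢ (Finset.univ : Finset V)).card := by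
            rw [hPairsDef]; exact Finset.card_filter_le _ _
        _ = n * n := by rw [Finset.card_product, Finset.card_univ, hn]
    have h8 : T.card * (7 * K + 1) ≤ n ^ 3 * T.card := by
      calc T.card * (7 * K + 1) ≤ (∑ p ∈ Pairs, (Fail p.1 p.2).card) * (7 * K + 1) :=
            Nat.mul_le_mul_right _ h1
        _ = ∑ p ∈ Pairs, ((Fail p.1 p.2).card * (7 * K + 1)) := Finset.sum_mul _ _ _
        _ ≤ ∑ _p ∈ Pairs, (n * T.card) := Finset.sum_le_sum h2
        _ = Pairs.card * (n * T.card) := by rw [Finset.sum_const, smul_eq_mul]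
        _ ≤ (n * n) * (n * T.card) := Nat.mul_le_mul_right _ h7
        _ = n ^ 3 * T.card := by ring
    have h9 : 7 * K + 1 ≤ n ^ 3 := by
      have h8' : (7 * K + 1) * T.card ≤ n ^ 3 * T.card := by
        calc (7 * K + 1) * T.card = T.card * (7 * K + 1) := by ring
          _ ≤ n ^ 3 * T.card := h8
      exact Nat.le_of_mul_le_mul_right h8' hTpos
    omega
  obtain ⟨σ, hσT, hσgood⟩ := hgood
  have hσmem : ∀ v, σ v ∈ Bd2 v := Fintype.mem_piFinset.mp hσT
  rcases lt_or_ge ((Ψ σ : ℕ)) c with hlt | hge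
  · -- primary color case
    obtain ⟨v, hv⟩ := hsuited σ hlt
    have hBdv : σ v ∈ Bd v := by
      have := hσmem v
      rw [hBd2Def] at this
      exact (Finset.mem_sdiff.mp this).1
    have hnotP : ¬ P v (σ v) := by
      rw [hBdDef] at hBdv
      exact (Finset.mem_filter.mp hBdv).2
    obtain ⟨hw1, hw2⟩ := hwitp v (σ v) hnotP
    have hcop : CoProper Adj (wit v (σ v)) σ := by
      intro a b hab
      by_cases hb : b = v
      · subst hb
        exact hw2 a (Or.inr (hsymm hab))
      · intro heq
        have hvb : v ≠ b := fun h => hb h.symm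
        apply hσgood v b hvb
        refine Finset.mem_image.mpr ⟨a, ?_, heq⟩
        rw [hNbrDef]
        exact Finset.mem_filter.mpr ⟨Finset.mem_univ _, hab⟩
    exact hproper _ _ hcop (Fin.val_injective (by rw [hw1, hv]))
  · -- secondary color case
    have hρ : Ψ (rho (Ψ σ)) = Ψ σ := hrho (Ψ σ) ⟨σ, rfl⟩
    have hcop : CoProper Adj (rho (Ψ σ)) σ := by
      intro a b hab heq
      have hnot : σ b ∉ Excl b := by
        have := hσmem b
        rw [hBd2Def] at this
        exact (Finset.mem_sdiff.mp this).2
      apply hnot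
      rw [hExclDef]
      exact Finset.mem_filter.mpr ⟨Finset.mem_univ _, ⟨Ψ σ, hge, a, hab, heq⟩⟩
    exact hproper _ _ hcop hρ
end

section
/- Let H be a finite graph (possibly with loops) on n vertices, let t ≥ 0 and c ≥ 1 be integers, let Ψ be a suited (c+t)-coloring of E_c(H), let b ∈ {1,…,c} be a primary color and v ∈ V(H), and let I(v,b) = { φ : Ψ(φ) = b and φ(v) = b }. If |I(v,b)| > n²·c^{n−2}, then b is v-robust with respect to Ψ. -/
/-- The number of maps `V → Fin c` with prescribed values at two distinct points is at most
`c ^ (n - 2)`. -/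
lemma card_fixed_two {V : Type*} [Fintype V] [DecidableEq V] {c : ℕ}
    (v w : V) (hvw : w ≠ v) (b a : Fin c) (n : ℕ) (hn : Fintype.card V = n)
    (s : Finset (V → Fin c)) (hs : ∀ ψ ∈ s, ψ v = b ∧ ψ w = a) :
    s.card ≤ c ^ (n - 2) := by
  classical
  have hcard : Fintype.card {x : V // x ≠ v ∧ x ≠ w} = n - 2 := by
    rw [Fintype.card_subtype]
    have hfil : (Finset.univ.filter fun x : V => x ≠ v ∧ x ≠ w)
        = Finset.univ \ {v, w} := by
      ext x
      simp [and_comm]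
    rw [hfil, Finset.card_sdiff_of_subset (Finset.subset_univ _), Finset.card_univ, hn]
    have : ({v, w} : Finset V).card = 2 := by
      rw [Finset.card_insert_of_notMem (by simp [Ne.symm hvw]), Finset.card_singleton]
    rw [this]
  have hinj : Set.InjOn (fun ψ : V → Fin c => fun x : {x : V // x ≠ v ∧ x ≠ w} => ψ x)
      (s : Set (V → Fin c)) := by
    intro ψ₁ h₁ ψ₂ h₂ heq
    funext x
    by_cases hxv : x = v
    · rw [hxv, (hs ψ₁ h₁).1, (hs ψ₂ h₂).1]
    by_cases hxw : x = w
    · rw [hxw, (hs ψ₁ h₁).2, (hs ψ₂ h₂).2]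
    · exact congrFun heq ⟨x, hxv, hxw⟩
  calc s.card ≤ (Finset.univ : Finset ({x : V // x ≠ v ∧ x ≠ w} → Fin c)).card :=
        Finset.card_le_card_of_injOn _ (fun _ _ => Finset.mem_univ _) hinj
    _ = c ^ (n - 2) := by
        rw [Finset.card_univ, Fintype.card_fun, Fintype.card_fin, hcard]

/-- Let `Ψ` be a suited `(c+t)`-coloring of `E_c(H)` where `H` has `n` vertices, let `b` be
a primary color and `v` a vertex, and let `I(v,b) = {φ : Ψ φ = b and φ v = b}`. If
`|I(v,b)| > n²·c^(n-2)`, then `b` is `v`-robust: every `φ` with `Ψ φ = b` takes the value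
`b` on the closed neighborhood of `v`. -/
theorem large_class_robust {V : Type*} [Fintype V]
    (Adj : V → V → Prop) (hsymm : Symmetric Adj)
    (n : ℕ) (hn : Fintype.card V = n)
    (t c : ℕ) (hc : 1 ≤ c)
    (Ψ : (V → Fin c) → Fin (c + t))
    (hproper : ∀ φ₁ φ₂, CoProper Adj φ₁ φ₂ → Ψ φ₁ ≠ Ψ φ₂)
    (hsuited : ∀ φ : V → Fin c, (Ψ φ : ℕ) < c → ∃ v : V, (φ v : ℕ) = (Ψ φ : ℕ))
    (b : Fin c) (v : V)
    (hlarge : n ^ 2 * c ^ (n - 2) <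
      {φ : V → Fin c | (Ψ φ : ℕ) = (b : ℕ) ∧ φ v = b}.ncard) :
    ∀ φ : V → Fin c, (Ψ φ : ℕ) = (b : ℕ) →
      ∃ w : V, (w = v ∨ Adj v w) ∧ φ w = b := by
  classical
  intro φ hφ
  by_contra hcon
  push_neg at hcon
  -- hcon : ∀ w, (w = v ∨ Adj v w) → φ w ≠ b
  set S : Set (V → Fin c) := {ψ | (Ψ ψ : ℕ) = (b : ℕ) ∧ ψ v = b} with hSdef
  have hfin : S.Finite := Set.toFinite S
  set T : Finset (V → Fin c) := hfin.toFinset with hTdef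
  have hmemT : ∀ ψ, ψ ∈ T ↔ (Ψ ψ : ℕ) = (b : ℕ) ∧ ψ v = b := by
    intro ψ
    rw [hTdef, Set.Finite.mem_toFinset]
    exact Iff.rfl
  -- every ψ in the class fails to be co-proper with φ
  have hwit : ∀ ψ ∈ T, ∃ p : V × V, Adj p.1 p.2 ∧ φ p.1 = ψ p.2 := by
    intro ψ hψ
    by_contra h
    push_neg at h
    have hco : CoProper Adj φ ψ := fun u w huw => h (u, w) huw
    exact hproper φ ψ hco (Fin.val_injective (hφ.trans ((hmemT ψ).1 hψ).1.symm))
  -- choose a witnessing pair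
  set f : (V → Fin c) → V × V := fun ψ =>
    if h : ∃ p : V × V, Adj p.1 p.2 ∧ φ p.1 = ψ p.2 then h.choose else (v, v) with hfdef
  have hfspec : ∀ ψ ∈ T, Adj (f ψ).1 (f ψ).2 ∧ φ (f ψ).1 = ψ (f ψ).2 := by
    intro ψ hψ
    have h := hwit ψ hψ
    simp only [hfdef, dif_pos h]
    exact h.choose_spec
  have hfne : ∀ ψ ∈ T, (f ψ).2 ≠ v := by
    intro ψ hψ heq
    have hsp := hfspec ψ hψ
    have : φ (f ψ).1 = b := by rw [hsp.2, heq, ((hmemT ψ).1 hψ).2]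
    exact hcon (f ψ).1 (Or.inr (hsymm (heq ▸ hsp.1))) this
  -- count fibers
  have hbound : T.card ≤ c ^ (n - 2) * (Finset.univ : Finset (V × V)).card := by
    apply Finset.card_le_mul_card_image_of_maps_to (f := f) (fun _ _ => Finset.mem_univ _)
    intro p _
    rcases Finset.eq_empty_or_nonempty (T.filter fun ψ => f ψ = p) with he | ⟨ψ₀, hψ₀⟩
    · simp [he]
    · rw [Finset.mem_filter] at hψ₀
      have hne : p.2 ≠ v := hψ₀.2 ▸ hfne ψ₀ hψ₀.1
      apply card_fixed_two v p.2 hne b (φ p.1) n hn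
      intro ψ hψ
      rw [Finset.mem_filter] at hψ
      refine ⟨((hmemT ψ).1 hψ.1).2, ?_⟩
      have := (hfspec ψ hψ.1).2
      rw [hψ.2] at this
      exact this.symm
  have hcardprod : (Finset.univ : Finset (V × V)).card = n ^ 2 := by
    rw [Finset.card_univ, Fintype.card_prod, hn, sq]
  have hT : S.ncard = T.card := by
    rw [hTdef, Set.ncard_eq_toFinset_card' S]
    congr 1
    simp [Set.Finite.toFinset]
  rw [hSdef] at hT
  rw [hT] at hlarge
  rw [hcardprod, mul_comm] at hbound
  omega
end

section
/- Let H be a finite graph (possibly with loops) on n vertices, let t ≥ 0 and c ≥ 1 be integers, let Ψ be a suited (c+t)-coloring of E_c(H), and let b ∈ {1,…,c} be a primary color. Define V_b to be the set of vertices v ∈ V(H) such that |{ φ : Ψ(φ) = b and φ(v) = b }| > n²·c^{n−2}. Then V_b is a clique in H, i.e., any two distinct vertices of V_b are adjacent in H. -/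
/-- Counting functions with two coordinates fixed. -/
theorem card_two_fixed {V : Type*} [Fintype V] [DecidableEq V] (n c : ℕ)
    (hn : Fintype.card V = n) (x y : V) (hxy : x ≠ y) (a₁ a₂ : Fin c) :
    (Finset.univ.filter (fun φ : V → Fin c => φ x = a₁ ∧ φ y = a₂)).card ≤ c ^ (n - 2) := by
  classical
  have hle : (Finset.univ.filter (fun φ : V → Fin c => φ x = a₁ ∧ φ y = a₂)).card
      ≤ (Finset.univ : Finset (({x, y}ᶜ : Finset V) → Fin c)).card := by
    apply Finset.card_le_card_of_injOn (fun φ z => φ z.1)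
    · intro φ _; exact Finset.mem_univ _
    · intro φ₁ h1 φ₂ h2 heq
      simp only [Finset.mem_coe, Finset.mem_filter, Finset.mem_univ, true_and] at h1 h2
      funext z
      by_cases hz : z = x
      · subst hz; rw [h1.1, h2.1]
      by_cases hz' : z = y
      · subst hz'; rw [h1.2, h2.2]
      · have hzmem : z ∈ ({x, y}ᶜ : Finset V) := by
          simp [hz, hz']
        exact congrFun heq ⟨z, hzmem⟩
  have hcard : (Finset.univ : Finset (({x, y}ᶜ : Finset V) → Fin c)).card
      = c ^ (n - 2) := by
    rw [Finset.card_univ, Fintype.card_fun, Fintype.card_fin, Fintype.card_coe,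
      Finset.card_compl, Finset.card_pair hxy, hn]
  exact le_trans hle (le_of_eq hcard)

/-- Let `Ψ` be a suited `(c+t)`-coloring of `E_c(H)` where `H` has `n` vertices, and let
`b` be a primary color. Then the set `V_b` of vertices `v` with
`|{φ : Ψ φ = b and φ v = b}| > n²·c^(n-2)` is a clique of `H`. -/
theorem Vb_is_clique {V : Type*} [Fintype V]
    (Adj : V → V → Prop) (hsymm : Symmetric Adj)
    (n : ℕ) (hn : Fintype.card V = n)
    (t c : ℕ) (hc : 1 ≤ c)
    (Ψ : (V → Fin c) → Fin (c + t))
    (hproper : ∀ φ₁ φ₂, CoProper Adj φ₁ φ₂ → Ψ φ₁ ≠ Ψ φ₂)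
    (hsuited : ∀ φ : V → Fin c, (Ψ φ : ℕ) < c → ∃ v : V, (φ v : ℕ) = (Ψ φ : ℕ))
    (b : Fin c) :
    ∀ u ∈ {v : V | n ^ 2 * c ^ (n - 2) <
        {φ : V → Fin c | (Ψ φ : ℕ) = (b : ℕ) ∧ φ v = b}.ncard},
      ∀ w ∈ {v : V | n ^ 2 * c ^ (n - 2) <
        {φ : V → Fin c | (Ψ φ : ℕ) = (b : ℕ) ∧ φ v = b}.ncard},
      u ≠ w → Adj u w := by
  classical
  intro u hu w hw huw
  by_contra hadj
  simp only [Set.mem_setOf_eq] at hu hw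
  -- Finset version of the sets A_v
  set A : V → Finset (V → Fin c) :=
    fun v => Finset.univ.filter (fun φ => (Ψ φ : ℕ) = (b : ℕ) ∧ φ v = b) with hA
  have hncard : ∀ v : V,
      {φ : V → Fin c | (Ψ φ : ℕ) = (b : ℕ) ∧ φ v = b}.ncard = (A v).card := by
    intro v
    rw [Set.ncard_eq_toFinset_card']
    congr 1
    ext φ
    simp [hA]
  rw [hncard u] at hu
  rw [hncard w] at hw
  set M := max (A u).card (A w).card with hM
  -- every pair in A u ×ˢ A w fails to be co-proper
  have hbad : ∀ p ∈ A u ×ˢ A w, ¬ CoProper Adj p.1 p.2 := by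
    rintro ⟨φ₁, φ₂⟩ hp hcp
    rw [Finset.mem_product] at hp
    apply hproper φ₁ φ₂ hcp
    have h1 : (Ψ φ₁ : ℕ) = (b : ℕ) := (Finset.mem_filter.1 hp.1).2.1
    have h2 : (Ψ φ₂ : ℕ) = (b : ℕ) := (Finset.mem_filter.1 hp.2).2.1
    exact Fin.ext (h1.trans h2.symm)
  -- the edge set
  set E : Finset (V × V) := Finset.univ.filter (fun p => Adj p.1 p.2) with hE
  -- covering the product by "violating pair" sets
  have hcover : A u ×ˢ A w ⊆
      E.biUnion (fun e => (A u ×ˢ A w).filter (fun p => p.1 e.1 = p.2 e.2)) := by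
    intro p hp
    have hnc := hbad p hp
    unfold CoProper at hnc
    push_neg at hnc
    obtain ⟨x, y, hxy, heq⟩ := hnc
    refine Finset.mem_biUnion.2 ⟨(x, y), ?_, Finset.mem_filter.2 ⟨hp, heq⟩⟩
    simp [hE, hxy]
  -- bounding each piece
  have hbound : ∀ e ∈ E,
      ((A u ×ˢ A w).filter (fun p => p.1 e.1 = p.2 e.2)).card ≤ c ^ (n - 2) * M := by
    rintro ⟨x, y⟩ he
    have hxy : Adj x y := (Finset.mem_filter.1 he).2
    by_cases hxu : x = u
    · -- then p.1 x = b, so the condition forces p.2 y = b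
      subst hxu
      have hyw : y ≠ w := by
        rintro rfl; exact hadj hxy
      have hsub : ((A x ×ˢ A w).filter (fun p => p.1 x = p.2 y)) ⊆
          A x ×ˢ (Finset.univ.filter (fun φ : V → Fin c => φ w = b ∧ φ y = b)) := by
        rintro ⟨φ₁, φ₂⟩ hp
        rw [Finset.mem_filter, Finset.mem_product] at hp
        obtain ⟨⟨h1, h2⟩, h3⟩ := hp
        have hb1 : φ₁ x = b := (Finset.mem_filter.1 h1).2.2
        have hb2 : φ₂ w = b := (Finset.mem_filter.1 h2).2.2
        have h3' : φ₁ x = φ₂ y := h3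
        exact Finset.mem_product.2
          ⟨h1, Finset.mem_filter.2 ⟨Finset.mem_univ _, hb2, by show φ₂ y = b; rw [← h3', hb1]⟩⟩
      calc ((A x ×ˢ A w).filter (fun p => p.1 x = p.2 y)).card
          ≤ ((A x) ×ˢ (Finset.univ.filter (fun φ : V → Fin c => φ w = b ∧ φ y = b))).card :=
            Finset.card_le_card hsub
        _ = (A x).card * (Finset.univ.filter (fun φ : V → Fin c => φ w = b ∧ φ y = b)).card :=
            Finset.card_product _ _
        _ ≤ (A x).card * c ^ (n - 2) :=
            Nat.mul_le_mul_left _ (card_two_fixed n c hn w y (Ne.symm hyw) b b)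
        _ = c ^ (n - 2) * (A x).card := Nat.mul_comm _ _
        _ ≤ c ^ (n - 2) * M := Nat.mul_le_mul_left _ (le_max_left _ _)
    · -- x ≠ u: for each φ₂, two coordinates of φ₁ are fixed
      have hsub : ((A u ×ˢ A w).filter (fun p => p.1 x = p.2 y)) ⊆
          (A w).biUnion (fun φ₂ =>
            (Finset.univ.filter (fun φ₁ : V → Fin c => φ₁ u = b ∧ φ₁ x = φ₂ y)) ×ˢ {φ₂}) := by
        rintro ⟨φ₁, φ₂⟩ hp
        rw [Finset.mem_filter, Finset.mem_product] at hp
        obtain ⟨⟨h1, h2⟩, h3⟩ := hp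
        have hb1 : φ₁ u = b := (Finset.mem_filter.1 h1).2.2
        refine Finset.mem_biUnion.2 ⟨φ₂, h2, ?_⟩
        exact Finset.mem_product.2
          ⟨Finset.mem_filter.2 ⟨Finset.mem_univ _, hb1, h3⟩, Finset.mem_singleton_self _⟩
      calc ((A u ×ˢ A w).filter (fun p => p.1 x = p.2 y)).card
          ≤ ∑ φ₂ ∈ A w,
              ((Finset.univ.filter (fun φ₁ : V → Fin c => φ₁ u = b ∧ φ₁ x = φ₂ y)) ×ˢ
                ({φ₂} : Finset (V → Fin c))).card :=
            le_trans (Finset.card_le_card hsub) (Finset.card_biUnion_le)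
        _ ≤ ∑ _φ₂ ∈ A w, c ^ (n - 2) := by
            apply Finset.sum_le_sum
            intro φ₂ _
            rw [Finset.card_product, Finset.card_singleton, Nat.mul_one]
            exact card_two_fixed n c hn u x (Ne.symm hxu) b (φ₂ y)
        _ = (A w).card * c ^ (n - 2) := by rw [Finset.sum_const, smul_eq_mul]
        _ = c ^ (n - 2) * (A w).card := Nat.mul_comm _ _
        _ ≤ c ^ (n - 2) * M := Nat.mul_le_mul_left _ (le_max_right _ _)
  -- put it together
  have hEcard : E.card ≤ n ^ 2 := by
    calc E.card ≤ (Finset.univ : Finset (V × V)).card := Finset.card_filter_le _ _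
      _ = n ^ 2 := by rw [Finset.card_univ, Fintype.card_prod, hn, sq]
  have htotal : (A u).card * (A w).card ≤ n ^ 2 * (c ^ (n - 2) * M) := by
    calc (A u).card * (A w).card = (A u ×ˢ A w).card := (Finset.card_product _ _).symm
      _ ≤ (E.biUnion (fun e => (A u ×ˢ A w).filter (fun p => p.1 e.1 = p.2 e.2))).card :=
          Finset.card_le_card hcover
      _ ≤ ∑ e ∈ E, ((A u ×ˢ A w).filter (fun p => p.1 e.1 = p.2 e.2)).card :=
          Finset.card_biUnion_le
      _ ≤ ∑ _e ∈ E, c ^ (n - 2) * M := Finset.sum_le_sum hbound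
      _ = E.card * (c ^ (n - 2) * M) := by rw [Finset.sum_const, smul_eq_mul]
      _ ≤ n ^ 2 * (c ^ (n - 2) * M) := Nat.mul_le_mul_right _ hEcard
  -- contradiction: both cards exceed n² c^(n-2)
  have hMpos : 0 < M :=
    lt_of_lt_of_le (Nat.lt_of_le_of_lt (Nat.zero_le _) hu) (le_max_left _ _)
  have hlt : n ^ 2 * (c ^ (n - 2) * M) < (A u).card * (A w).card := by
    rcases max_cases (A u).card (A w).card with ⟨hmax, _⟩ | ⟨hmax, _⟩
    · calc n ^ 2 * (c ^ (n - 2) * M) = M * (n ^ 2 * c ^ (n - 2)) := by ring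
        _ < M * (A w).card := Nat.mul_lt_mul_of_pos_left hw hMpos
        _ = (A u).card * (A w).card := by rw [hM, hmax]
    · calc n ^ 2 * (c ^ (n - 2) * M) = (n ^ 2 * c ^ (n - 2)) * M := by ring
        _ < (A u).card * M := Nat.mul_lt_mul_of_pos_right hu hMpos
        _ = (A u).card * (A w).card := by rw [hM, hmax]
  omega
end

section
/- Let G be a finite simple graph and q ≥ 2 an integer, and let G^∘ denote G with a loop added at every vertex. Then the map ι sending each φ : V(G) → {1,…,c} to the map φ* : V(G) × {1,…,q} → {1,…,c} defined by φ*(g,i) = φ(g) is a graph embedding of the exponential graph E_c(G^∘) into E_c(G ⊠ K_q): it is injective, and φ₁, φ₂ are co-proper in E_c(G^∘) if and only if φ₁*, φ₂* are co-proper in E_c(G ⊠ K_q). -/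
/-- The strong product `G ⊠ H` of two simple graphs. -/
def SimpleGraph.strongProd {α β : Type*} (G : SimpleGraph α) (H : SimpleGraph β) :
    SimpleGraph (α × β) where
  Adj p q := (G.Adj p.1 q.1 ∧ H.Adj p.2 q.2) ∨ (G.Adj p.1 q.1 ∧ p.2 = q.2) ∨
    (p.1 = q.1 ∧ H.Adj p.2 q.2)
  symm := by
    refine ⟨?_⟩
    rintro p q (⟨h1, h2⟩ | ⟨h1, h2⟩ | ⟨h1, h2⟩)
    · exact Or.inl ⟨h1.symm, h2.symm⟩
    · exact Or.inr (Or.inl ⟨h1.symm, h2.symm⟩)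
    · exact Or.inr (Or.inr ⟨h1.symm, h2.symm⟩)
  loopless := by
    refine ⟨?_⟩
    rintro p (⟨h1, _⟩ | ⟨h1, _⟩ | ⟨_, h2⟩)
    · exact G.irrefl h1
    · exact G.irrefl h1
    · exact H.irrefl h2

/-! The maps `φ*` factor through the projection `V × Fin q → V`, so co-properness of `φ₁*, φ₂*`
in `G ⊠ K_q` is co-properness of `φ₁, φ₂` for the image of its adjacency under the projection;
as `K_q` has an edge, that image is `G` with a loop at every vertex. -/

theorem coProper_comp_iff {α β C : Type*} (r : α → α → Prop) (f : α → β) (φ₁ φ₂ : β → C) :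
    CoProper r (fun a => φ₁ (f a)) (fun a => φ₂ (f a)) ↔ CoProper (Relation.Map r f f) φ₁ φ₂ := by
  constructor
  · rintro h _ _ ⟨a, b, hab, rfl, rfl⟩
    exact h a b hab
  · exact fun h a b hab => h (f a) (f b) ⟨a, b, hab, rfl, rfl⟩

namespace SimpleGraph

variable {α β : Type*} (G : SimpleGraph α) {H : SimpleGraph β}

theorem map_strongProd_adj_fst (hH : H ≠ ⊥) :
    Relation.Map (G.strongProd H).Adj Prod.fst Prod.fst = fun a b => a = b ∨ G.Adj a b := by
  obtain ⟨x, y, hxy⟩ := ne_bot_iff_exists_adj.mp hH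
  ext a b
  constructor
  · rintro ⟨⟨a, i⟩, ⟨b, j⟩, ⟨hab, -⟩ | ⟨hab, -⟩ | ⟨rfl, -⟩, rfl, rfl⟩
    exacts [Or.inr hab, Or.inr hab, Or.inl rfl]
  · rintro (rfl | hab)
    · exact ⟨(a, x), (a, y), Or.inr (Or.inr ⟨rfl, hxy⟩), rfl, rfl⟩
    · exact ⟨(a, x), (b, x), Or.inr (Or.inl ⟨hab, rfl⟩), rfl, rfl⟩

end SimpleGraph

theorem exp_graph_embedding_general {V : Type*} (G : SimpleGraph V)
    (q c : ℕ) (hq : 2 ≤ q) :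
    Function.Injective
      (fun (φ : V → Fin c) => (fun p : V × Fin q => φ p.1)) ∧
    ∀ φ₁ φ₂ : V → Fin c,
      (CoProper (fun a b : V => a = b ∨ G.Adj a b) φ₁ φ₂ ↔
        CoProper (G.strongProd (⊤ : SimpleGraph (Fin q))).Adj
          (fun p : V × Fin q => φ₁ p.1) (fun p : V × Fin q => φ₂ p.1)) := by
  have : Nontrivial (Fin q) := Fin.nontrivial_iff_two_le.mpr hq
  refine ⟨Prod.fst_surjective.injective_comp_right, fun φ₁ φ₂ => ?_⟩
  rw [coProper_comp_iff _ Prod.fst, G.map_strongProd_adj_fst top_ne_bot]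

/-- The map `ι` sending `φ : V(G) → {1,…,c}` to the map `φ* : V(G) × V(K_q) → {1,…,c}`,
`φ*(g,i) = φ(g)`, is an embedding of `E_c(G°)` into `E_c(G ⊠ K_q)`, where `G°` is `G`
with loops added at every vertex: `ι` is injective, and `φ₁, φ₂` are co-proper in
`E_c(G°)` iff `φ₁*, φ₂*` are co-proper in `E_c(G ⊠ K_q)`. -/
theorem exp_graph_embedding {V : Type*} [Fintype V] (G : SimpleGraph V)
    (q c : ℕ) (hq : 2 ≤ q) (hc : 1 ≤ c) :
    Function.Injective
      (fun (φ : V → Fin c) => (fun p : V × Fin q => φ p.1)) ∧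
    ∀ φ₁ φ₂ : V → Fin c,
      (CoProper (fun a b : V => a = b ∨ G.Adj a b) φ₁ φ₂ ↔
        CoProper (G.strongProd (⊤ : SimpleGraph (Fin q))).Adj
          (fun p : V × Fin q => φ₁ p.1) (fun p : V × Fin q => φ₂ p.1)) :=
  exp_graph_embedding_general G q c hq
end
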